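/- Let ρ be a density operator on (ℂ²⊗H_{A'}) ⊗ (ℂ²⊗H_{B'}) and let M = 2√2·c·(ψ_θ − φ_θ) ⊗ I_{A'B'} ⊕ M_⊥ be a Hermitian operator in block form with ‖M_⊥‖ < 2√2·c, c > 0, where ψ_θ, φ_θ are the orthogonal rank-one projectors onto |ψ_θ⟩ and |φ_θ⟩. If Tr[M ρ] = 2√2·c, then ρ = ψ_θ ⊗ σ for some density operator σ on H_{A'}⊗H_{B'}. -/

import Mathlib

open Matrix Kronecker
open scoped ComplexOrder

noncomputable def ketPsi (θ : ℝ) : Fin 2 × Fin 2 → ℂ := fun p =>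
  if p = (0, 0) then (Real.cos (θ / 2) : ℂ)
  else if p = (1, 1) then (Real.sin (θ / 2) : ℂ) else 0

noncomputable def ketPhi (θ : ℝ) : Fin 2 × Fin 2 → ℂ := fun p =>
  if p = (0, 1) then (Real.sin (θ / 2) : ℂ)
  else if p = (1, 0) then (-Real.cos (θ / 2) : ℂ) else 0

noncomputable def psiProj (θ : ℝ) : Matrix (Fin 2 × Fin 2) (Fin 2 × Fin 2) ℂ :=
  vecMulVec (ketPsi θ) (star (ketPsi θ))

noncomputable def phiProj (θ : ℝ) : Matrix (Fin 2 × Fin 2) (Fin 2 × Fin 2) ℂ :=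
  vecMulVec (ketPhi θ) (star (ketPhi θ))

/-! ### Auxiliary lemmas -/

section Aux

variable {m n κ : Type*} [Fintype m] [Fintype n] [Fintype κ]

omit [Fintype κ] in
lemma myTrace_conjTranspose_mul_self_eq_zero {X : Matrix m n ℂ}
    (h : (Xᴴ * X).trace = 0) : X = 0 := by
  have hd : ∀ j, (Xᴴ * X) j j = star (fun i => X i j) ⬝ᵥ (fun i => X i j) := by
    intro j; simp [mul_apply, dotProduct, conjTranspose_apply]
  have hnn : ∀ j ∈ Finset.univ, (0:ℂ) ≤ (Xᴴ * X) j j := by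
    intro j _; rw [hd j]; exact dotProduct_star_self_nonneg _
  have := (Finset.sum_eq_zero_iff_of_nonneg hnn).mp h
  ext i j
  have hj := this j (Finset.mem_univ j)
  rw [hd j] at hj
  have := dotProduct_star_self_eq_zero.mp hj
  simpa using congr_fun this i

omit [Fintype m] [Fintype κ] in
lemma myPsd_mul_trace_zero {A B : Matrix n n ℂ} (hA : A.PosSemidef) (hB : B.PosSemidef)
    (h : (A * B).trace = 0) : A * B = 0 := by
  classical
  obtain ⟨C, hC⟩ := by open scoped MatrixOrder in exact CStarAlgebra.nonneg_iff_eq_star_mul_self.mp hA.nonneg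
  obtain ⟨D, hD⟩ := by open scoped MatrixOrder in exact CStarAlgebra.nonneg_iff_eq_star_mul_self.mp hB.nonneg
  rw [star_eq_conjTranspose] at hC hD
  subst hC hD
  have key : (D * Cᴴ)ᴴ * (D * Cᴴ) = C * Dᴴ * D * Cᴴ := by
    rw [conjTranspose_mul, conjTranspose_conjTranspose]; noncomm_ring
  have htr : ((D * Cᴴ)ᴴ * (D * Cᴴ)).trace = 0 := by
    rw [key, Matrix.trace_mul_cycle]
    rw [show Cᴴ * (C * Dᴴ) * D = Cᴴ * C * (Dᴴ * D) by noncomm_ring]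
    exact h
  have hz := myTrace_conjTranspose_mul_self_eq_zero htr
  have hCD : C * Dᴴ = 0 := by
    have := congrArg conjTranspose hz
    simpa [conjTranspose_mul] using this
  calc Cᴴ * C * (Dᴴ * D) = Cᴴ * (C * Dᴴ) * D := by noncomm_ring
  _ = 0 := by rw [hCD]; simp

lemma myPosSemidef_fromBlocks [DecidableEq m] [DecidableEq κ] {A : Matrix m m ℂ}
    {D : Matrix κ κ ℂ} (hA : A.PosSemidef) (hD : D.PosSemidef) :
    (fromBlocks A 0 0 D).PosSemidef := by
  rw [posSemidef_iff_dotProduct_mulVec]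
  constructor
  · unfold Matrix.IsHermitian
    simp [fromBlocks_conjTranspose, hA.1.eq, hD.1.eq]
  · intro x
    have hx : star x = Sum.elim (star (x ∘ Sum.inl)) (star (x ∘ Sum.inr)) := by
      funext i; cases i <;> rfl
    rw [hx, fromBlocks_mulVec]
    simp only [zero_mulVec, add_zero, zero_add]
    rw [sumElim_dotProduct_sumElim]
    exact add_nonneg (hA.dotProduct_mulVec_nonneg _) (hD.dotProduct_mulVec_nonneg _)

omit [Fintype m] [Fintype n] [Fintype κ] in
lemma myKroneckerConjTranspose (A : Matrix m m ℂ) (B : Matrix n n ℂ) :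
    (A ⊗ₖ B)ᴴ = Aᴴ ⊗ₖ Bᴴ := by
  ext ⟨i, k⟩ ⟨j, l⟩
  simp [conjTranspose_apply, mul_comm]

omit [Fintype m] [Fintype n] [Fintype κ] in
lemma mySubKronecker (A B : Matrix m m ℂ) (C : Matrix n n ℂ) :
    (A - B) ⊗ₖ C = A ⊗ₖ C - B ⊗ₖ C := by
  ext ⟨i, k⟩ ⟨j, l⟩
  simp [kroneckerMap_apply, sub_mul]

omit [Fintype m] [Fintype κ] in
lemma myPosSemidef_of_herm_idem {Z : Matrix n n ℂ} (h1 : Zᴴ = Z) (h2 : Z * Z = Z) :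
    Z.PosSemidef := by
  rw [← h2]
  nth_rewrite 1 [← h1]
  exact posSemidef_conjTranspose_mul_self Z

omit [Fintype m] [Fintype κ] in
lemma myPosSemidef_smul {A : Matrix n n ℂ} (hA : A.PosSemidef) {s : ℝ} (hs : 0 ≤ s) :
    ((s : ℂ) • A).PosSemidef := by
  rw [posSemidef_iff_dotProduct_mulVec]
  constructor
  · unfold Matrix.IsHermitian
    rw [conjTranspose_smul, hA.1.eq]
    norm_num
  · intro x
    rw [smul_mulVec, dotProduct_smul, smul_eq_mul]
    exact mul_nonneg (by exact_mod_cast hs) (hA.dotProduct_mulVec_nonneg x)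

omit [Fintype m] [Fintype κ] in
lemma myVecMulVec_mul (a b c d : n → ℂ) :
    vecMulVec a b * vecMulVec c d = (b ⬝ᵥ c) • vecMulVec a d := by
  ext i j
  simp only [mul_apply, vecMulVec_apply, Matrix.smul_apply, dotProduct, smul_eq_mul, Finset.sum_mul,
    Finset.mul_sum]
  apply Finset.sum_congr rfl
  intros; ring

omit [Fintype m] [Fintype n] [Fintype κ] in
lemma myHermVecMulVec (v : n → ℂ) : (vecMulVec v (star v))ᴴ = vecMulVec v (star v) := by
  ext i j
  simp only [conjTranspose_apply, vecMulVec_apply, Pi.star_apply, star_mul', star_star]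
  ring

lemma myHermQuadReal {N : Matrix κ κ ℂ} (hN : N.IsHermitian)
    (x : κ → ℂ) : star (star x ⬝ᵥ N *ᵥ x) = star x ⬝ᵥ N *ᵥ x := by
  rw [← star_dotProduct_star, star_star, star_mulVec, hN.eq, ← dotProduct_mulVec]

lemma myPosDef_of_norm_lt [DecidableEq κ]
    (M : Matrix κ κ ℂ) (hM : M.IsHermitian) {s : ℝ}
    (h : ‖Matrix.toEuclideanCLM (𝕜 := ℂ) M‖ < s) :
    ((s : ℂ) • (1 : Matrix κ κ ℂ) - M).PosDef := by
  have hH : ((s : ℂ) • (1 : Matrix κ κ ℂ) - M).IsHermitian := by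
    unfold Matrix.IsHermitian
    rw [conjTranspose_sub, conjTranspose_smul, hM.eq, conjTranspose_one]
    norm_num
  refine posDef_iff_dotProduct_mulVec.mpr ⟨hH, fun x hx => ?_⟩
  set T := Matrix.toEuclideanCLM (𝕜 := ℂ) M with hT
  set x' : EuclideanSpace ℂ κ := WithLp.toLp 2 x with hx'
  have hxne : x' ≠ 0 := by
    rw [hx']; intro h0; apply hx; simpa using congrArg WithLp.ofLp h0
  have e1 : star x ⬝ᵥ x = ((‖x'‖ ^ 2 : ℝ) : ℂ) := by
    rw [dotProduct_comm, ← EuclideanSpace.inner_toLp_toLp, ← hx', inner_self_eq_norm_sq_to_K]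
    norm_num
  have e2 : star x ⬝ᵥ (M *ᵥ x) = (inner ℂ x' (T x') : ℂ) := by
    rw [hT, hx', toEuclideanCLM_toLp, EuclideanSpace.inner_toLp_toLp, dotProduct_comm]
  have hz : star x ⬝ᵥ (((s : ℂ) • (1 : Matrix κ κ ℂ) - M) *ᵥ x)
      = ((s * ‖x'‖ ^ 2 : ℝ) : ℂ) - (inner ℂ x' (T x') : ℂ) := by
    rw [sub_mulVec, smul_mulVec, one_mulVec, dotProduct_sub, dotProduct_smul,
      smul_eq_mul, e1, e2]
    push_cast; ring
  rw [hz]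
  have hre : Complex.re ((inner ℂ x' (T x') : ℂ)) ≤ ‖T‖ * ‖x'‖ ^ 2 := by
    calc Complex.re ((inner ℂ x' (T x') : ℂ)) ≤ ‖(inner ℂ x' (T x') : ℂ)‖ := Complex.re_le_norm _
    _ ≤ ‖x'‖ * ‖T x'‖ := norm_inner_le_norm _ _
    _ ≤ ‖x'‖ * (‖T‖ * ‖x'‖) := by
        have := T.le_opNorm x'
        nlinarith [norm_nonneg x']
    _ = ‖T‖ * ‖x'‖ ^ 2 := by ring
  have him : Complex.im ((inner ℂ x' (T x') : ℂ)) = 0 := by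
    have h0 := myHermQuadReal hM x
    rw [e2] at h0
    have h1 := congrArg Complex.im h0
    simp only [Complex.star_def, Complex.conj_im] at h1
    linarith
  have hxpos : 0 < ‖x'‖ := norm_pos_iff.mpr hxne
  rw [Complex.lt_def]
  constructor
  · simp only [Complex.zero_re, Complex.sub_re, Complex.ofReal_re]
    have h2 : (0:ℝ) < (s - ‖T‖) * ‖x'‖ ^ 2 := mul_pos (by linarith) (pow_pos hxpos 2)
    nlinarith
  · simp only [Complex.zero_im, Complex.sub_im, Complex.ofReal_im, him]
    ring

omit [Fintype n] in
lemma myTraceFromBlocks [DecidableEq m] [DecidableEq κ] (A : Matrix m m ℂ) (B : Matrix m κ ℂ)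
    (C : Matrix κ m ℂ) (D : Matrix κ κ ℂ) :
    (fromBlocks A B C D).trace = A.trace + D.trace := by
  simp [Matrix.trace, Fintype.sum_sum_type, Matrix.diag]

end Aux

lemma ketPsi_dot (θ : ℝ) : star (ketPsi θ) ⬝ᵥ ketPsi θ = 1 := by
  have h := Real.sin_sq_add_cos_sq (θ / 2)
  simp [ketPsi, dotProduct, Fintype.sum_prod_type, Fin.sum_univ_two, Prod.ext_iff,
    Complex.star_def, Complex.conj_ofReal, -Complex.ofReal_cos, -Complex.ofReal_sin,
    ← Complex.ofReal_mul, ← Complex.ofReal_add]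
  norm_cast
  nlinarith

lemma ketPhi_dot (θ : ℝ) : star (ketPhi θ) ⬝ᵥ ketPhi θ = 1 := by
  have h := Real.sin_sq_add_cos_sq (θ / 2)
  simp [ketPhi, dotProduct, Fintype.sum_prod_type, Fin.sum_univ_two, Prod.ext_iff,
    Complex.star_def, Complex.conj_ofReal, -Complex.ofReal_cos, -Complex.ofReal_sin,
    -Complex.ofReal_neg, ← Complex.ofReal_mul, ← Complex.ofReal_add]
  norm_cast
  nlinarith

lemma ketPsi_phi_dot (θ : ℝ) : star (ketPsi θ) ⬝ᵥ ketPhi θ = 0 := by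
  simp [ketPsi, ketPhi, dotProduct, Fintype.sum_prod_type, Fin.sum_univ_two, Prod.ext_iff]

lemma ketPhi_psi_dot (θ : ℝ) : star (ketPhi θ) ⬝ᵥ ketPsi θ = 0 := by
  simp [ketPsi, ketPhi, dotProduct, Fintype.sum_prod_type, Fin.sum_univ_two, Prod.ext_iff]

lemma psiProj_trace (θ : ℝ) : (psiProj θ).trace = 1 := by
  have h := ketPsi_dot θ
  simp only [psiProj, Matrix.trace, Matrix.diag, vecMulVec_apply] at *
  rw [← h]
  simp [dotProduct, mul_comm]

/-- The "column-embedding" matrix `W = |ψ⟩ ⊗ I`. -/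
noncomputable def Wmat (θ : ℝ) (nA nB : ℕ) :
    Matrix ((Fin 2 × Fin 2) × (Fin nA × Fin nB)) (Fin nA × Fin nB) ℂ :=
  Matrix.of fun p l => ketPsi θ p.1 * (if p.2 = l then 1 else 0)

lemma W_mul_conj (θ : ℝ) (nA nB : ℕ) (τ : Matrix (Fin nA × Fin nB) (Fin nA × Fin nB) ℂ) :
    Wmat θ nA nB * τ * (Wmat θ nA nB)ᴴ = psiProj θ ⊗ₖ τ := by
  ext ⟨i, k⟩ ⟨j, l⟩
  simp only [mul_apply, conjTranspose_apply, Wmat, Matrix.of_apply, kroneckerMap_apply,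
    psiProj, vecMulVec_apply, Pi.star_apply, star_mul', apply_ite (star : ℂ → ℂ), star_one,
    star_zero, ite_mul, mul_ite, mul_zero, zero_mul, mul_one, one_mul, Finset.sum_ite_eq,
    Finset.mem_univ, if_true]
  ring

/-- Saturating the Tsirelson bound forces the state to be `ψ_θ ⊗ σ`.
The Hilbert space is `(ℂ²⊗ℂ²) ⊗ (H_{A'}⊗H_{B'}) ⊕ (complement κ)`, the Bell
operator acts as `2√2 c (ψ_θ − φ_θ) ⊗ I` on the first block and as `M_⊥`, with
`‖M_⊥‖ < 2√2 c`, on the complement. -/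
theorem selftest_state (θ c : ℝ) (h1 : 0 < θ) (h2 : θ ≤ Real.pi / 2) (hc : 0 < c)
    (nA nB : ℕ) (κ : Type) [Fintype κ] [DecidableEq κ]
    (Mperp : Matrix κ κ ℂ) (hMperpH : Mperp.IsHermitian)
    (hMperpNorm : ‖Matrix.toEuclideanCLM (𝕜 := ℂ) Mperp‖ < 2 * Real.sqrt 2 * c)
    (ρ : Matrix ((Fin 2 × Fin 2) × (Fin nA × Fin nB) ⊕ κ)
         ((Fin 2 × Fin 2) × (Fin nA × Fin nB) ⊕ κ) ℂ)
    (hρ : ρ.PosSemidef) (hρtr : ρ.trace = 1)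
    (hsat : (Matrix.fromBlocks
        (((2 * Real.sqrt 2 * c : ℝ) : ℂ) •
          ((psiProj θ - phiProj θ) ⊗ₖ (1 : Matrix (Fin nA × Fin nB) (Fin nA × Fin nB) ℂ)))
        0 0 Mperp * ρ).trace = ((2 * Real.sqrt 2 * c : ℝ) : ℂ)) :
    ∃ σ : Matrix (Fin nA × Fin nB) (Fin nA × Fin nB) ℂ,
      σ.PosSemidef ∧ σ.trace = 1 ∧
      ρ = Matrix.fromBlocks (psiProj θ ⊗ₖ σ) 0 0 0 := by
  set s : ℝ := 2 * Real.sqrt 2 * c with hsdef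
  have hs : 0 < s := by
    rw [hsdef]; positivity
  have hsne : (s : ℂ) ≠ 0 := by exact_mod_cast hs.ne'
  set P := psiProj θ with hPdef
  set Q := phiProj θ with hQdef
  -- projector algebra
  have hPP : P * P = P := by
    rw [hPdef, psiProj, myVecMulVec_mul, ketPsi_dot, one_smul]
  have hQQ : Q * Q = Q := by
    rw [hQdef, phiProj, myVecMulVec_mul, ketPhi_dot, one_smul]
  have hPQ : P * Q = 0 := by
    rw [hPdef, hQdef, psiProj, phiProj, myVecMulVec_mul, ketPsi_phi_dot, zero_smul]
  have hQP : Q * P = 0 := by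
    rw [hPdef, hQdef, psiProj, phiProj, myVecMulVec_mul, ketPhi_psi_dot, zero_smul]
  have hPH : Pᴴ = P := myHermVecMulVec _
  have hQH : Qᴴ = Q := myHermVecMulVec _
  have hE2 : (P - Q) * (P - Q) = P + Q := by
    rw [mul_sub, sub_mul, sub_mul, hPP, hPQ, hQP, hQQ]
    abel
  set K := (P - Q) ⊗ₖ (1 : Matrix (Fin nA × Fin nB) (Fin nA × Fin nB) ℂ) with hKdef
  have hKH : Kᴴ = K := by
    rw [hKdef, myKroneckerConjTranspose, conjTranspose_sub, hPH, hQH, conjTranspose_one]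
  have hK2 : K * K = (P + Q) ⊗ₖ (1 : Matrix (Fin nA × Fin nB) (Fin nA × Fin nB) ℂ) := by
    rw [hKdef, ← mul_kronecker_mul, hE2, Matrix.one_mul]
  set Mbig := Matrix.fromBlocks ((s : ℂ) • K) 0 0 Mperp with hMdef
  -- the complement block
  have hpd := myPosDef_of_norm_lt Mperp hMperpH hMperpNorm
  -- positivity of s•1 - Mbig
  have hK1psd : ((s : ℂ) • ((1 : Matrix _ _ ℂ) - K)).PosSemidef := by
    apply myPosSemidef_smul _ hs.le
    have hsplit : (1 : Matrix _ _ ℂ) - K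
        = ((1 - P) ⊗ₖ (1 : Matrix (Fin nA × Fin nB) (Fin nA × Fin nB) ℂ))
          + (Q ⊗ₖ (1 : Matrix (Fin nA × Fin nB) (Fin nA × Fin nB) ℂ)) := by
      have e : ((1 - P) ⊗ₖ (1 : Matrix (Fin nA × Fin nB) (Fin nA × Fin nB) ℂ))
          + (Q ⊗ₖ (1 : Matrix (Fin nA × Fin nB) (Fin nA × Fin nB) ℂ))
          = ((1 : Matrix (Fin 2 × Fin 2) (Fin 2 × Fin 2) ℂ) - (P - Q)) ⊗ₖ 1 := by
        rw [← add_kronecker, show (1 : Matrix (Fin 2 × Fin 2) (Fin 2 × Fin 2) ℂ) - P + Q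
          = 1 - (P - Q) from by abel]
      rw [e, mySubKronecker, one_kronecker_one, hKdef]
    rw [hsplit]
    apply Matrix.PosSemidef.add
    · apply myPosSemidef_of_herm_idem
      · rw [myKroneckerConjTranspose, conjTranspose_sub, conjTranspose_one, hPH,
          conjTranspose_one]
      · rw [← mul_kronecker_mul, Matrix.one_mul, mul_sub, sub_mul, sub_mul, hPP,
          Matrix.one_mul, Matrix.mul_one]
        norm_num
    · apply myPosSemidef_of_herm_idem
      · rw [myKroneckerConjTranspose, hQH, conjTranspose_one]
      · rw [← mul_kronecker_mul, hQQ, Matrix.one_mul]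
  have hSpsd : ((s : ℂ) • (1 : Matrix _ _ ℂ) - Mbig).PosSemidef := by
    have hblocks : (s : ℂ) • (1 : Matrix _ _ ℂ) - Mbig
        = Matrix.fromBlocks ((s : ℂ) • ((1 : Matrix _ _ ℂ) - K)) 0 0
            ((s : ℂ) • (1 : Matrix κ κ ℂ) - Mperp) := by
      rw [hMdef, ← fromBlocks_one, fromBlocks_smul, sub_eq_add_neg, fromBlocks_neg,
        fromBlocks_add, smul_sub]
      simp only [fromBlocks_inj]
      refine ⟨by abel, by simp, by simp, by abel⟩
    rw [hblocks]
    exact myPosSemidef_fromBlocks hK1psd hpd.posSemidef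
  -- saturation forces (s•1 - Mbig) ρ = 0
  have htr0 : (((s : ℂ) • (1 : Matrix _ _ ℂ) - Mbig) * ρ).trace = 0 := by
    rw [sub_mul, smul_mul_assoc, Matrix.one_mul, trace_sub, trace_smul, hρtr, smul_eq_mul,
      mul_one, hMdef]
    rw [show (Matrix.fromBlocks ((s:ℂ) • K) 0 0 Mperp * ρ).trace = (s : ℂ) from hsat]
    ring
  have hSρ := myPsd_mul_trace_zero hSpsd hρ htr0
  have hMρ : Mbig * ρ = (s : ℂ) • ρ := by
    rw [sub_mul, smul_mul_assoc, Matrix.one_mul] at hSρ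
    exact (sub_eq_zero.mp hSρ).symm
  -- block decomposition of ρ
  set A := ρ.toBlocks₁₁ with hAdef
  set B := ρ.toBlocks₁₂ with hBdef
  set C := ρ.toBlocks₂₁ with hCdef
  set D := ρ.toBlocks₂₂ with hDdef
  have hρb : ρ = Matrix.fromBlocks A B C D := (fromBlocks_toBlocks ρ).symm
  rw [hρb, hMdef, fromBlocks_multiply, fromBlocks_smul] at hMρ
  simp only [Matrix.zero_mul, Matrix.mul_zero, add_zero, zero_add, fromBlocks_inj] at hMρ
  obtain ⟨h11, h12, h21, h22⟩ := hMρ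
  -- kill the complement blocks
  have hdet : IsUnit ((s : ℂ) • (1 : Matrix κ κ ℂ) - Mperp).det :=
    (Matrix.isUnit_iff_isUnit_det _).mp hpd.isUnit
  set N := (s : ℂ) • (1 : Matrix κ κ ℂ) - Mperp with hNdef
  have hD : D = 0 := by
    have hN0 : N * D = 0 := by
      rw [hNdef, sub_mul, smul_mul_assoc, Matrix.one_mul, h22, sub_self]
    calc D = (N⁻¹ * N) * D := by rw [Matrix.nonsing_inv_mul _ hdet, Matrix.one_mul]
    _ = N⁻¹ * (N * D) := by rw [Matrix.mul_assoc]
    _ = 0 := by rw [hN0, Matrix.mul_zero]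
  have hC : C = 0 := by
    have hN0 : N * C = 0 := by
      rw [hNdef, Matrix.sub_mul, Matrix.smul_mul, Matrix.one_mul, h21, sub_self]
    calc C = (N⁻¹ * N) * C := by rw [Matrix.nonsing_inv_mul _ hdet, Matrix.one_mul]
    _ = N⁻¹ * (N * C) := by rw [Matrix.mul_assoc]
    _ = 0 := by rw [hN0, Matrix.mul_zero]
  have hB : B = 0 := by
    have hBC : B = Cᴴ := by
      ext i j
      have := congr_fun (congr_fun hρ.1 (Sum.inl i)) (Sum.inr j)
      simpa [conjTranspose_apply, hBdef, hCdef, Matrix.toBlocks₁₂, Matrix.toBlocks₂₁]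
        using this.symm
    rw [hBC, hC, conjTranspose_zero]
  -- the main block
  have hAH : Aᴴ = A := by
    ext i j
    have := congr_fun (congr_fun hρ.1 (Sum.inl i)) (Sum.inl j)
    simpa [conjTranspose_apply, hAdef, Matrix.toBlocks₁₁] using this
  have hApsd : A.PosSemidef := hρ.submatrix Sum.inl
  have hKA : K * A = A := by
    have h11' : (s : ℂ) • (K * A) = (s : ℂ) • A := by
      rw [← smul_mul_assoc]; exact h11
    exact smul_right_injective
      (Matrix ((Fin 2 × Fin 2) × Fin nA × Fin nB) ((Fin 2 × Fin 2) × Fin nA × Fin nB) ℂ) hsne h11'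
  have hAK : A * K = A := by
    have hct := congrArg conjTranspose hKA
    rwa [conjTranspose_mul, hKH, hAH] at hct
  have hPQA : ((P + Q) ⊗ₖ (1 : Matrix (Fin nA × Fin nB) (Fin nA × Fin nB) ℂ)) * A = A := by
    have h3 : K * (K * A) = A := by rw [hKA, hKA]
    rwa [← Matrix.mul_assoc, hK2] at h3
  have hQA : (Q ⊗ₖ (1 : Matrix (Fin nA × Fin nB) (Fin nA × Fin nB) ℂ)) * A = 0 := by
    have h4 : ((P + Q) ⊗ₖ (1 : Matrix (Fin nA × Fin nB) (Fin nA × Fin nB) ℂ)) * A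
        - K * A = 0 := by rw [hPQA, hKA, sub_self]
    rw [hKdef, ← sub_mul, ← mySubKronecker, show P + Q - (P - Q) = Q + Q by abel,
      add_kronecker, add_mul] at h4
    have h5 : (2 : ℂ) • ((Q ⊗ₖ (1 : Matrix (Fin nA × Fin nB) (Fin nA × Fin nB) ℂ)) * A) = 0 := by
      rw [two_smul]; exact h4
    have := smul_eq_zero.mp h5
    simpa using this
  have hPA : (P ⊗ₖ (1 : Matrix (Fin nA × Fin nB) (Fin nA × Fin nB) ℂ)) * A = A := by
    have h5 : K * A = A := hKA
    rw [hKdef, mySubKronecker, sub_mul, hQA, sub_zero] at h5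
    exact h5
  have hAP : A * (P ⊗ₖ (1 : Matrix (Fin nA × Fin nB) (Fin nA × Fin nB) ℂ)) = A := by
    have hct := congrArg conjTranspose hPA
    rwa [conjTranspose_mul, myKroneckerConjTranspose, hPH, conjTranspose_one, hAH] at hct
  -- factor the main block through W
  set W := Wmat θ nA nB with hWdef
  have hWW : W * Wᴴ = P ⊗ₖ (1 : Matrix (Fin nA × Fin nB) (Fin nA × Fin nB) ℂ) := by
    have := W_mul_conj θ nA nB 1
    rwa [Matrix.mul_one] at this
  set σ := Wᴴ * A * W with hσdef
  have hAeq : A = P ⊗ₖ σ := by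
    calc A = (P ⊗ₖ (1 : Matrix (Fin nA × Fin nB) (Fin nA × Fin nB) ℂ)) * A
            * (P ⊗ₖ (1 : Matrix (Fin nA × Fin nB) (Fin nA × Fin nB) ℂ)) := by
          rw [hPA, hAP]
    _ = (W * Wᴴ) * A * (W * Wᴴ) := by rw [hWW]
    _ = W * (Wᴴ * A * W) * Wᴴ := by simp only [Matrix.mul_assoc]
    _ = P ⊗ₖ σ := by rw [← hσdef, hWdef]; exact W_mul_conj θ nA nB σ
  have hσpsd : σ.PosSemidef := hApsd.conjTranspose_mul_mul_same W
  have hρeq : ρ = Matrix.fromBlocks (P ⊗ₖ σ) 0 0 0 := by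
    rw [hρb, hB, hC, hD, hAeq]
  have hσtr : σ.trace = 1 := by
    have h6 : ρ.trace = (P ⊗ₖ σ).trace := by
      rw [hρeq, myTraceFromBlocks, trace_zero, add_zero]
    rw [hρtr] at h6
    rw [trace_kronecker, hPdef, psiProj_trace, one_mul] at h6
    exact h6.symm
  exact ⟨σ, hσpsd, hσtr, hρeq⟩
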